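/- If X ~ N(0, s²) with s > 0, then E[max{ζ(X), 0}] ≤ s²/(2σ²) + ((ρ_L+ρ_U)/σ²)·s·√(2/π), where ζ is the piecewise function of the RGCUSUM statistic. In particular with s = σ‖p‖₂, E[max{ζ(X),0}] ≤ ‖p‖₂²/2 + ((ρ_L+ρ_U)/σ)‖p‖₂√(2/π). -/

import Mathlib

/-! The linear pieces of `ζ` are the tangent lines of the parabola `x ^ 2 / (2σ²)` at `±ρL`
and `±ρU`, so `ζ` lies below that parabola, and so does `max ζ 0`. Hence
`E[max (ζ X) 0] ≤ E[X²] / (2σ²) = s² / (2σ²)`, while the `E|X|` term of the bound is nonnegative. -/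

open MeasureTheory ProbabilityTheory NNReal

noncomputable def zeta (σ ρL ρU x : ℝ) : ℝ :=
  if ρL ≤ |x| ∧ |x| ≤ ρU then x ^ 2 / (2 * σ ^ 2)
  else if |x| < ρL then (2 * |x| * ρL - ρL ^ 2) / (2 * σ ^ 2)
  else (2 * |x| * ρU - ρU ^ 2) / (2 * σ ^ 2)

lemma two_mul_abs_mul_sub_sq_le_sq (x ρ : ℝ) : 2 * |x| * ρ - ρ ^ 2 ≤ x ^ 2 := by
  nlinarith [sq_nonneg (|x| - ρ), sq_abs x]

lemma zeta_le_sq_div (σ ρL ρU x : ℝ) : zeta σ ρL ρU x ≤ x ^ 2 / (2 * σ ^ 2) := by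
  unfold zeta
  split_ifs
  · exact le_rfl
  all_goals
    gcongr
    exact two_mul_abs_mul_sub_sq_le_sq _ _

lemma integral_sq_gaussianReal_zero (v : ℝ≥0) : ∫ x, x ^ 2 ∂gaussianReal 0 v = v := by
  rw [← variance_fun_id_gaussianReal (μ := 0) (v := v)]
  exact (variance_of_integral_eq_zero aemeasurable_id' integral_id_gaussianReal).symm

lemma integral_max_zeta_zero_gaussianReal_le (σ ρL ρU : ℝ) (v : ℝ≥0) :
    ∫ x, max (zeta σ ρL ρU x) 0 ∂gaussianReal 0 v ≤ v / (2 * σ ^ 2) := by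
  have hsq : Integrable (fun x : ℝ ↦ x ^ 2) (gaussianReal 0 v) :=
    (memLp_id_gaussianReal 2).integrable_sq
  calc ∫ x, max (zeta σ ρL ρU x) 0 ∂gaussianReal 0 v
      ≤ ∫ x, x ^ 2 / (2 * σ ^ 2) ∂gaussianReal 0 v :=
        integral_mono_of_nonneg (.of_forall fun _ ↦ le_max_right _ _) (hsq.div_const _)
          (.of_forall fun x ↦ max_le (zeta_le_sq_div σ ρL ρU x) (by positivity))
    _ = v / (2 * σ ^ 2) := by rw [integral_div, integral_sq_gaussianReal_zero]

theorem stmt2 (σ ρL ρU s : ℝ) (hσ : 0 < σ) (hL : 0 < ρL) (hLU : ρL ≤ ρU)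
    (hs : 0 < s) (v : ℝ≥0) (hv : (v : ℝ) = s ^ 2) :
    (∫ x, max (zeta σ ρL ρU x) 0 ∂(gaussianReal 0 v) ≤
      s ^ 2 / (2 * σ ^ 2) + ((ρL + ρU) / σ ^ 2) * s * Real.sqrt (2 / Real.pi)) ∧
    (∀ {M : ℕ} (p : EuclideanSpace ℝ (Fin M)), s = σ * ‖p‖ →
      ∫ x, max (zeta σ ρL ρU x) 0 ∂(gaussianReal 0 v) ≤
        ‖p‖ ^ 2 / 2 + ((ρL + ρU) / σ) * ‖p‖ * Real.sqrt (2 / Real.pi)) := by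
  have hbound := integral_max_zeta_zero_gaussianReal_le σ ρL ρU v
  rw [hv] at hbound
  have hρ : 0 ≤ ρL + ρU := by linarith
  refine ⟨hbound.trans (le_add_of_nonneg_right (by positivity)), fun p hp ↦ ?_⟩
  refine hbound.trans (le_of_eq_of_le ?_ (le_add_of_nonneg_right (by positivity)))
  rw [hp]
  field_simp
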